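/- Suppose t ≥ |x−y*|²/(2(N+2)). Then for every τ ∈ (0, t/2], −(∂_{x_N}Γ_N)(x−y*+τe_N, t−τ) ≥ 2^{-(N+2)/2} · (−(∂_{x_N}Γ_N)(x−y*+τe_N, t/2)), and consequently H(x,y,t) ≥ 2^{-(N+2)/2} (1 − e^{-(4(x_N+y_N)+t)/8}) Γ_N(x−y*, t/2). -/

import Mathlib

open Real MeasureTheory Set

set_option maxHeartbeats 1000000

/-- The `N`-dimensional Gauss kernel `Γ_N(x,t) = (4πt)^{-N/2} e^{-|x|²/(4t)}`. -/
noncomputable def gauss (N : ℕ) (x : Fin N → ℝ) (t : ℝ) : ℝ :=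
  (4 * π * t) ^ (-(N : ℝ) / 2) * Real.exp (-(∑ i, x i ^ 2) / (4 * t))

/-- Reflection `y* = (y', -y_N)` across the boundary of the half-space. -/
noncomputable def ystar (N : ℕ) (y : Fin (N + 1) → ℝ) : Fin (N + 1) → ℝ :=
  Function.update y (Fin.last N) (-(y (Fin.last N)))

/-- The last unit vector `e_N`. -/
noncomputable def eN (N : ℕ) : Fin (N + 1) → ℝ := Pi.single (Fin.last N) 1

/-- `-(∂_{x_N}Γ_N)(w, s)`. -/
noncomputable def negDGauss (N : ℕ) (w : Fin (N + 1) → ℝ) (s : ℝ) : ℝ :=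
  -deriv (fun r => gauss (N + 1) (Function.update w (Fin.last N) r) s) (w (Fin.last N))

/-- `H(x,y,t) = -2 ∫_0^t (∂_{x_N}Γ_N)(x - y* + τ e_N, t - τ) dτ`. -/
noncomputable def hker (N : ℕ) (x y : Fin (N + 1) → ℝ) (t : ℝ) : ℝ :=
  2 * ∫ τ in (0 : ℝ)..t, negDGauss N (x - ystar N y + τ • eN N) (t - τ)


/- ## Auxiliary lemmas -/

lemma sum_update_sq {N : ℕ} (w : Fin (N+1) → ℝ) (r : ℝ) :
    ∑ i, (Function.update w (Fin.last N) r) i ^ 2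
      = (∑ i, w i ^ 2) - w (Fin.last N) ^ 2 + r ^ 2 := by
  have h : ∀ i, (Function.update w (Fin.last N) r) i ^ 2
      = Function.update (fun j => w j ^ 2) (Fin.last N) (r ^ 2) i := by
    intro i
    by_cases h : i = Fin.last N <;> simp [h, Function.update_apply]
  simp_rw [h]
  rw [Finset.sum_update_of_mem (Finset.mem_univ _),
    Finset.sum_sdiff_eq_sub (Finset.subset_univ _), Finset.sum_singleton]
  ring

lemma negDGauss_eq {N : ℕ} (w : Fin (N+1) → ℝ) {s : ℝ} (hs : 0 < s) :
    negDGauss N w s = (4*π*s) ^ (-((N:ℝ)+1)/2) * (w (Fin.last N)/(2*s))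
      * Real.exp (-(∑ i, w i ^ 2)/(4*s)) := by
  have hfun : (fun r => gauss (N + 1) (Function.update w (Fin.last N) r) s)
      = fun r => (4*π*s) ^ (-((N:ℝ)+1)/2)
        * Real.exp (-(((∑ i, w i ^ 2) - w (Fin.last N) ^ 2) + r ^ 2)/(4*s)) := by
    funext r
    rw [gauss, sum_update_sq]
    push_cast
    ring_nf
  rw [negDGauss, hfun]
  have h1 : HasDerivAt (fun r : ℝ => -(((∑ i, w i ^ 2) - w (Fin.last N) ^ 2) + r ^ 2)/(4*s))
      (-(2 * w (Fin.last N))/(4*s)) (w (Fin.last N)) := by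
    have := ((hasDerivAt_pow 2 (w (Fin.last N))).const_add
      ((∑ i, w i ^ 2) - w (Fin.last N) ^ 2)).neg.div_const (4*s)
    simpa using this
  have h2 := ((h1.exp).const_mul ((4*π*s) ^ (-((N:ℝ)+1)/2)))
  rw [h2.deriv]
  have h3 : (∑ i, w i ^ 2) - w (Fin.last N) ^ 2 + w (Fin.last N) ^ 2 = ∑ i, w i ^ 2 := by ring
  rw [h3]
  field_simp
  ring

lemma ratio_key (n : ℕ) (c D s₁ s₂ : ℝ) (hc : 0 ≤ c) (hD : 0 ≤ D) (hs2 : 0 < s₂)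
    (h1 : s₂ ≤ s₁) (h2 : s₁ ≤ 2 * s₂) :
    (2:ℝ) ^ (-((n:ℝ)+1+2)/2) * ((4*π*s₂) ^ (-((n:ℝ)+1)/2) * (c/(2*s₂)) * Real.exp (-D/(4*s₂)))
      ≤ (4*π*s₁) ^ (-((n:ℝ)+1)/2) * (c/(2*s₁)) * Real.exp (-D/(4*s₁)) := by
  have hs1 : 0 < s₁ := lt_of_lt_of_le hs2 h1
  have hπ : (0:ℝ) < π := Real.pi_pos
  have hn : (0:ℝ) ≤ n := Nat.cast_nonneg n
  have hz : -((n:ℝ)+1)/2 ≤ 0 := by linarith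
  have e1 : (2:ℝ) ^ (-((n:ℝ)+1)/2) * (4*π*s₂) ^ (-((n:ℝ)+1)/2) ≤ (4*π*s₁) ^ (-((n:ℝ)+1)/2) := by
    have h4 : (2:ℝ) * (4*π*s₂) = 4*π*(2*s₂) := by ring
    rw [← Real.mul_rpow (by norm_num) (by positivity), h4]
    exact Real.rpow_le_rpow_of_nonpos (by positivity) (by nlinarith) hz
  have e2 : (2:ℝ)⁻¹ * (c/(2*s₂)) ≤ c/(2*s₁) := by
    rw [inv_mul_eq_div, div_div]
    exact div_le_div_of_nonneg_left hc (by positivity) (by linarith)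
  have e3 : Real.exp (-D/(4*s₂)) ≤ Real.exp (-D/(4*s₁)) := by
    apply Real.exp_le_exp.mpr
    rw [neg_div, neg_div, neg_le_neg_iff]
    exact div_le_div_of_nonneg_left hD (by positivity) (by linarith)
  have hsplit : (2:ℝ) ^ (-((n:ℝ)+1+2)/2) = (2:ℝ) ^ (-((n:ℝ)+1)/2) * (2:ℝ)⁻¹ := by
    rw [show ((2:ℝ)⁻¹) = (2:ℝ) ^ (-1 : ℝ) by
      rw [Real.rpow_neg (by norm_num), Real.rpow_one],
      ← Real.rpow_add (by norm_num)]
    norm_num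
    ring_nf
  rw [hsplit]
  calc (2:ℝ) ^ (-((n:ℝ)+1)/2) * (2:ℝ)⁻¹
        * ((4*π*s₂) ^ (-((n:ℝ)+1)/2) * (c/(2*s₂)) * Real.exp (-D/(4*s₂)))
      = ((2:ℝ) ^ (-((n:ℝ)+1)/2) * (4*π*s₂) ^ (-((n:ℝ)+1)/2)) * ((2:ℝ)⁻¹ * (c/(2*s₂)))
        * Real.exp (-D/(4*s₂)) := by ring
    _ ≤ (4*π*s₁) ^ (-((n:ℝ)+1)/2) * (c/(2*s₁)) * Real.exp (-D/(4*s₁)) := by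
        apply mul_le_mul (mul_le_mul e1 e2 (by positivity) (by positivity)) e3
          (Real.exp_pos _).le
        positivity

lemma w_eq_update {N : ℕ} (v : Fin (N+1) → ℝ) (τ : ℝ) :
    v + τ • eN N = Function.update v (Fin.last N) (v (Fin.last N) + τ) := by
  funext i
  by_cases h : i = Fin.last N <;>
    simp [h, eN, Function.update_apply, Pi.single_apply]

lemma vlast {N : ℕ} (x y : Fin (N+1) → ℝ) :
    (x - ystar N y) (Fin.last N) = x (Fin.last N) + y (Fin.last N) := by
  simp [ystar, sub_neg_eq_add]

lemma negDGauss_zero {N : ℕ} (w : Fin (N+1) → ℝ) : negDGauss N w 0 = 0 := by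
  have h : (fun r => gauss (N + 1) (Function.update w (Fin.last N) r) 0) = fun _ => 0 := by
    funext r
    rw [gauss]
    rw [show (4*π*(0:ℝ)) = 0 by ring, Real.zero_rpow]
    · ring
    · have hn : (0:ℝ) ≤ N := Nat.cast_nonneg N
      push_cast
      intro h
      rw [div_eq_zero_iff] at h
      rcases h with h | h <;> nlinarith
  rw [negDGauss, h, deriv_const]
  ring

lemma hasDeriv_negGauss {N : ℕ} (v : Fin (N+1) → ℝ) {s : ℝ} (hs : 0 < s) (τ₀ : ℝ) :
    HasDerivAt (fun τ => -gauss (N+1) (Function.update v (Fin.last N) (v (Fin.last N) + τ)) s)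
      (negDGauss N (Function.update v (Fin.last N) (v (Fin.last N) + τ₀)) s) τ₀ := by
  set a := v (Fin.last N)
  set S := ∑ i, v i ^ 2
  set C := (4*π*s) ^ (-((N:ℝ)+1)/2) with hC
  have hfun : (fun τ => -gauss (N+1) (Function.update v (Fin.last N) (a + τ)) s)
      = fun τ => -(C * Real.exp (-((S - a^2) + (a+τ)^2)/(4*s))) := by
    funext τ
    have hcast : -(↑(N+1):ℝ)/2 = -((N:ℝ)+1)/2 := by push_cast; ring
    rw [gauss, sum_update_sq, hcast, ← hC]
  rw [hfun]
  have h0 : HasDerivAt (fun τ : ℝ => (a + τ)^2) (2*(a+τ₀)) τ₀ := by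
    have := ((hasDerivAt_id τ₀).const_add a).pow 2
    exact this.congr_deriv (by norm_num)
  have h1 : HasDerivAt (fun τ : ℝ => -((S - a^2) + (a+τ)^2)/(4*s))
      (-(2*(a+τ₀))/(4*s)) τ₀ :=
    (h0.const_add (S - a^2)).neg.div_const (4*s)
  have h2 := ((h1.exp).const_mul C).neg
  refine h2.congr_deriv ?_
  rw [negDGauss_eq _ hs, sum_update_sq]
  simp only [Function.update_self]
  rw [← hC]
  field_simp
  ring

lemma pow_mul_exp_neg_le (m : ℕ) {K u : ℝ} (hK : 0 < K) (hu : 0 ≤ u) :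
    u^m * Real.exp (-(K*u)) ≤ m.factorial / K^m := by
  have h := Real.pow_div_factorial_le_exp (x := K*u) (mul_nonneg hK.le hu) m
  rw [div_le_iff₀ (by positivity)] at h
  rw [Real.exp_neg, ← div_eq_mul_inv, div_le_iff₀ (Real.exp_pos _),
    div_mul_eq_mul_div, le_div_iff₀ (by positivity)]
  calc u^m * K^m = (K*u)^m := by rw [mul_pow]; ring
    _ ≤ Real.exp (K*u) * ↑m.factorial := h
    _ = ↑m.factorial * Real.exp (K*u) := by ring

lemma negDGauss_contOn {N : ℕ} (v : Fin (N+1) → ℝ) (t : ℝ) :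
    ContinuousOn
      (fun τ => negDGauss N (Function.update v (Fin.last N) (v (Fin.last N) + τ)) (t - τ))
      (Iio t) := by
  have heq : EqOn
      (fun τ => (4*π*(t-τ)) ^ (-((N:ℝ)+1)/2) * ((v (Fin.last N)+τ)/(2*(t-τ)))
        * Real.exp (-((∑ i, v i ^ 2) - v (Fin.last N)^2 + (v (Fin.last N)+τ)^2)/(4*(t-τ))))
      (fun τ => negDGauss N (Function.update v (Fin.last N) (v (Fin.last N) + τ)) (t - τ))
      (Iio t) := by
    intro τ hτ
    have hs : 0 < t - τ := by have := mem_Iio.mp hτ; linarith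
    simp only
    rw [negDGauss_eq _ hs, sum_update_sq, Function.update_self]
  apply ContinuousOn.congr ?_ heq.symm
  intro τ hτ
  have hs : 0 < t - τ := by have := mem_Iio.mp hτ; linarith
  have hb : (0:ℝ) < 4*π*(t-τ) := mul_pos (by positivity) hs
  apply ContinuousAt.continuousWithinAt
  have h1 : ContinuousAt (fun τ : ℝ => (4*π*(t-τ)) ^ (-((N:ℝ)+1)/2)) τ :=
    ContinuousAt.rpow_const (by fun_prop) (Or.inl (ne_of_gt hb))
  have h2 : ContinuousAt (fun τ : ℝ => (v (Fin.last N)+τ)/(2*(t-τ))) τ :=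
    ContinuousAt.div (by fun_prop) (by fun_prop) (by linarith)
  have h3 : ContinuousAt (fun τ : ℝ =>
      Real.exp (-((∑ i, v i ^ 2) - v (Fin.last N)^2 + (v (Fin.last N)+τ)^2)/(4*(t-τ)))) τ :=
    (ContinuousAt.div (by fun_prop) (by fun_prop) (by linarith)).rexp
  exact (h1.mul h2).mul h3

/-- If `t ≥ |x-y*|²/(2(N+2))`, then for every `τ ∈ (0, t/2]`,
`-(∂_{x_N}Γ_N)(x-y*+τe_N, t-τ) ≥ 2^{-(N+2)/2} (-(∂_{x_N}Γ_N)(x-y*+τe_N, t/2))`, and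
consequently `H(x,y,t) ≥ 2^{-(N+2)/2}(1 - e^{-(4(x_N+y_N)+t)/8}) Γ_N(x-y*, t/2)`
(dimension is `N+1 ≥ 1`). -/
theorem stmt_10 (N : ℕ) (x y : Fin (N + 1) → ℝ) (hx : 0 ≤ x (Fin.last N))
    (hy : 0 ≤ y (Fin.last N)) (t : ℝ) (ht : 0 < t)
    (hD : (∑ i, (x i - ystar N y i) ^ 2) / (2 * ((N : ℝ) + 1 + 2)) ≤ t) :
    (∀ τ ∈ Set.Ioc (0 : ℝ) (t / 2),
        negDGauss N (x - ystar N y + τ • eN N) (t - τ)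
          ≥ (2 : ℝ) ^ (-((N : ℝ) + 1 + 2) / 2) * negDGauss N (x - ystar N y + τ • eN N) (t / 2)) ∧
      hker N x y t
        ≥ (2 : ℝ) ^ (-((N : ℝ) + 1 + 2) / 2)
            * (1 - Real.exp (-(4 * (x (Fin.last N) + y (Fin.last N)) + t) / 8))
            * gauss (N + 1) (x - ystar N y) (t / 2) := by
  have hπ := Real.pi_pos
  set v : Fin (N+1) → ℝ := x - ystar N y with hv
  set a : ℝ := v (Fin.last N) with haa
  have ha : a = x (Fin.last N) + y (Fin.last N) := vlast x y
  have ha0 : 0 ≤ a := by rw [ha]; linarith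
  have hs2 : (0:ℝ) < t/2 := by linarith
  set β : ℝ := (2 : ℝ) ^ (-((N : ℝ) + 1 + 2) / 2) with hβ
  have hβ0 : 0 ≤ β := by rw [hβ]; positivity
  set U : ℝ → Fin (N+1) → ℝ := fun τ => Function.update v (Fin.last N) (a + τ) with hU
  -- pointwise key inequality on [0, t/2]
  have key : ∀ τ ∈ Icc (0:ℝ) (t/2),
      β * negDGauss N (U τ) (t/2) ≤ negDGauss N (U τ) (t - τ) := by
    intro τ hτ
    obtain ⟨h0τ, hτ2⟩ := hτ
    have hs1 : 0 < t - τ := by linarith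
    rw [negDGauss_eq _ hs1, negDGauss_eq _ hs2, hU]
    simp only [Function.update_self]
    exact ratio_key N _ _ _ _ (by linarith) (Finset.sum_nonneg fun i _ => sq_nonneg _)
      hs2 (by linarith) (by linarith)
  refine ⟨fun τ hτ => ?_, ?_⟩
  · simp only [w_eq_update, ← hv, ← haa, ← hβ, ← hU]
    exact key τ ⟨hτ.1.le, hτ.2⟩
  -- Part 2
  set S : ℝ := ∑ i, v i ^ 2 with hS
  have hSa : a^2 ≤ S := by
    rw [hS, haa]
    exact Finset.single_le_sum (f := fun i => v i ^ 2) (fun i _ => sq_nonneg _)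
      (Finset.mem_univ (Fin.last N))
  set F : ℝ → ℝ := fun τ => negDGauss N (U τ) (t - τ) with hF
  set G : ℝ → ℝ := fun τ => negDGauss N (U τ) (t/2) with hG
  have hkerEq : hker N x y t = 2 * ∫ τ in (0:ℝ)..t, F τ := by
    rw [hker]
    congr 1
    apply intervalIntegral.integral_congr
    intro τ _
    show negDGauss N (x - ystar N y + τ • eN N) (t - τ) = F τ
    rw [w_eq_update]
  have hcont : ContinuousOn F (Iio t) := negDGauss_contOn v t
  have hint1 : IntervalIntegrable F volume 0 (t/2) := by
    apply ContinuousOn.intervalIntegrable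
    apply hcont.mono
    rw [uIcc_of_le (by linarith)]
    intro τ hτ
    exact lt_of_le_of_lt hτ.2 (by linarith)
  -- integrability on [t/2, t]
  set K : ℝ := t^2/16 with hK
  have hKpos : 0 < K := by rw [hK]; positivity
  set M : ℝ := ((a + t)/2) * ((N+2).factorial / K^(N+2) + 1/K) with hM
  have hint2 : IntervalIntegrable F volume (t/2) t := by
    rw [intervalIntegrable_iff_integrableOn_Ioo_of_le (by linarith)]
    refine ⟨((hcont.mono fun τ hτ => hτ.2).aestronglyMeasurable measurableSet_Ioo), ?_⟩
    apply HasFiniteIntegral.restrict_of_bounded (C := M) measure_Ioo_lt_top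
    rw [ae_restrict_iff' measurableSet_Ioo]
    apply ae_of_all
    intro τ hτ
    obtain ⟨hτ1, hτ2⟩ := hτ
    have hτ0 : 0 < τ := by linarith
    have hs : 0 < t - τ := by linarith
    have hb : (0:ℝ) < 4*π*(t-τ) := mul_pos (by positivity) hs
    have hn : (0:ℝ) ≤ N := Nat.cast_nonneg N
    have hz : -((N:ℝ)+1)/2 ≤ 0 := by linarith
    have hFτ : F τ = (4*π*(t-τ)) ^ (-((N:ℝ)+1)/2) * ((a+τ)/(2*(t-τ)))
        * Real.exp (-(S - a^2 + (a+τ)^2)/(4*(t-τ))) := by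
      rw [hF]
      simp only
      rw [negDGauss_eq _ hs, hU]
      simp only [Function.update_self]
      rw [sum_update_sq, ← hS, ← haa]
    have hFpos : 0 ≤ F τ := by
      rw [hFτ]
      apply mul_nonneg (mul_nonneg (Real.rpow_nonneg hb.le _)
        (div_nonneg (by linarith) (by linarith))) (Real.exp_pos _).le
    rw [Real.norm_eq_abs, abs_of_nonneg hFpos, hFτ]
    -- bound each factor
    have hq1 : (4*π*(t-τ)) ^ (-((N:ℝ)+1)/2) ≤ (t-τ) ^ (-((N:ℝ)+1)/2) :=
      Real.rpow_le_rpow_of_nonpos hs (by nlinarith [mul_pos (show (0:ℝ) < 4*π - 1 by nlinarith [Real.pi_gt_three]) hs]) hz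
    have hq2 : (t-τ) ^ (-((N:ℝ)+1)/2) ≤ (t-τ) ^ (-((N:ℝ)+1)) + 1 := by
      rcases le_or_gt (t-τ) 1 with h | h
      · have := Real.rpow_le_rpow_of_exponent_ge hs h
          (show -((N:ℝ)+1) ≤ -((N:ℝ)+1)/2 by linarith)
        linarith
      · have h1 := Real.rpow_le_one_of_one_le_of_nonpos h.le hz
        have h2 := Real.rpow_nonneg hs.le (-((N:ℝ)+1))
        linarith
    have hq3 : (a+τ)/(2*(t-τ)) ≤ (a+t)/(2*(t-τ)) :=
      (div_le_div_iff_of_pos_right (by linarith)).mpr (by linarith)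
    have hDge : t^2/4 ≤ S - a^2 + (a+τ)^2 := by
      nlinarith [mul_pos (show (0:ℝ) < τ - t/2 by linarith) (show (0:ℝ) < τ + t/2 by linarith),
        mul_nonneg ha0 hτ0.le, sq_nonneg a]
    have hq4 : Real.exp (-(S - a^2 + (a+τ)^2)/(4*(t-τ))) ≤ Real.exp (-(K * (t-τ)⁻¹)) := by
      apply Real.exp_le_exp.mpr
      rw [neg_div, neg_le_neg_iff]
      calc K * (t-τ)⁻¹ = (t^2/4)/(4*(t-τ)) := by rw [hK]; field_simp; ring
        _ ≤ (S - a^2 + (a+τ)^2)/(4*(t-τ)) := (div_le_div_iff_of_pos_right (by linarith)).mpr hDge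
    -- assemble
    have step1 : (4*π*(t-τ)) ^ (-((N:ℝ)+1)/2) * ((a+τ)/(2*(t-τ)))
        * Real.exp (-(S - a^2 + (a+τ)^2)/(4*(t-τ)))
        ≤ ((t-τ) ^ (-((N:ℝ)+1)) + 1) * ((a+t)/(2*(t-τ))) * Real.exp (-(K * (t-τ)⁻¹)) := by
      apply mul_le_mul (mul_le_mul (hq1.trans hq2) hq3
        (div_nonneg (by linarith) (by linarith))
        (by positivity)) hq4 (Real.exp_pos _).le
      apply mul_nonneg (by positivity) (div_nonneg (by linarith) (by linarith))
    refine step1.trans ?_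
    have hpow : (t-τ) ^ (-((N:ℝ)+1)) = ((t-τ)⁻¹)^(N+1 : ℕ) := by
      rw [show -((N:ℝ)+1) = -((N+1:ℕ):ℝ) by push_cast; ring,
        Real.rpow_neg hs.le, Real.rpow_natCast, ← inv_pow]
    rw [hpow]
    set u : ℝ := (t-τ)⁻¹ with hu
    have hu0 : 0 ≤ u := by rw [hu]; positivity
    have heq : (u^(N+1) + 1) * ((a+t)/(2*(t-τ))) * Real.exp (-(K * u))
        = ((a+t)/2) * (u^(N+2) * Real.exp (-(K*u)) + u^1 * Real.exp (-(K*u))) := by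
      have : (a+t)/(2*(t-τ)) = ((a+t)/2) * u := by rw [hu]; field_simp
      rw [this]; ring
    rw [heq, hM]
    apply mul_le_mul_of_nonneg_left _ (by linarith)
    have b1 := pow_mul_exp_neg_le (N+2) hKpos hu0
    have b2 := pow_mul_exp_neg_le 1 hKpos hu0
    simp only [pow_one, Nat.factorial_one, Nat.cast_one] at b2
    have b2' : u^1 * Real.exp (-(K*u)) ≤ 1/K := by rw [pow_one]; exact b2
    exact add_le_add b1 b2'
  -- nonnegativity on [t/2, t]
  have hFnonneg : ∀ τ ∈ Icc (t/2) t, 0 ≤ F τ := by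
    intro τ hτ
    rcases eq_or_lt_of_le hτ.2 with heq | hlt
    · rw [hF]
      simp only
      rw [heq, sub_self, negDGauss_zero]
    · have hs : 0 < t - τ := by linarith
      have hb : (0:ℝ) < 4*π*(t-τ) := mul_pos (by positivity) hs
      rw [hF]
      simp only
      rw [negDGauss_eq _ hs, hU]
      simp only [Function.update_self]
      apply mul_nonneg (mul_nonneg (Real.rpow_nonneg hb.le _)
        (div_nonneg (by linarith [hτ.1]) (by linarith))) (Real.exp_pos _).le
  -- continuity & FTC for G
  have hGeq : G = fun τ => (4*π*(t/2)) ^ (-((N:ℝ)+1)/2) * ((a+τ)/(2*(t/2)))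
      * Real.exp (-(S - a^2 + (a+τ)^2)/(4*(t/2))) := by
    funext τ
    rw [hG]
    simp only
    rw [negDGauss_eq _ hs2, hU]
    simp only [Function.update_self]
    rw [sum_update_sq, ← hS, ← haa]
  have hGcont : Continuous G := by
    rw [hGeq]
    have hc1 : Continuous (fun τ : ℝ => (a+τ)/(2*(t/2))) := (continuous_const.add continuous_id).div_const _
    have hc2 : Continuous (fun τ : ℝ => Real.exp (-(S - a^2 + (a+τ)^2)/(4*(t/2)))) := by
      apply Real.continuous_exp.comp
      apply Continuous.div_const
      fun_prop
    exact (continuous_const.mul hc1).mul hc2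
  have hFTC : ∫ τ in (0:ℝ)..(t/2), G τ
      = (1 - Real.exp (-(4*a+t)/8)) * gauss (N+1) v (t/2) := by
    have h1 : ∫ τ in (0:ℝ)..(t/2), G τ
        = (-gauss (N+1) (U (t/2)) (t/2)) - (-gauss (N+1) (U 0) (t/2)) := by
      exact intervalIntegral.integral_eq_sub_of_hasDerivAt
        (f := fun τ => -gauss (N+1) (U τ) (t/2)) (f' := G)
        (fun τ _ => hasDeriv_negGauss v hs2 τ) (hGcont.intervalIntegrable _ _)
    have hU0 : U 0 = v := by
      rw [hU]
      simp only [add_zero, haa]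
      exact Function.update_eq_self _ _
    have hshift : gauss (N+1) (U (t/2)) (t/2) = Real.exp (-(4*a+t)/8) * gauss (N+1) v (t/2) := by
      rw [hU, gauss, gauss, sum_update_sq, ← hS, ← haa]
      have hexp : -(S - a^2 + (a + t/2)^2)/(4*(t/2)) = -(4*a+t)/8 + -(S)/(4*(t/2)) := by
        field_simp
        ring
      rw [hexp, Real.exp_add]
      ring
    rw [h1, hU0, hshift]
    ring
  -- assemble part 2
  have hmono : ∫ τ in (0:ℝ)..(t/2), (β * G τ) ≤ ∫ τ in (0:ℝ)..(t/2), F τ :=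
    intervalIntegral.integral_mono_on (by linarith)
      ((continuous_const.mul hGcont).intervalIntegrable _ _) hint1 key
  rw [intervalIntegral.integral_const_mul, hFTC] at hmono
  have hsplitInt : ∫ τ in (0:ℝ)..t, F τ
      = (∫ τ in (0:ℝ)..(t/2), F τ) + ∫ τ in (t/2)..t, F τ :=
    (intervalIntegral.integral_add_adjacent_intervals hint1 hint2).symm
  have htail : 0 ≤ ∫ τ in (t/2)..t, F τ :=
    intervalIntegral.integral_nonneg (by linarith) hFnonneg
  have hΓ : 0 ≤ gauss (N+1) v (t/2) := by
    rw [gauss]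
    apply mul_nonneg (Real.rpow_nonneg (by positivity) _) (Real.exp_pos _).le
  have hone : 0 ≤ 1 - Real.exp (-(4*a+t)/8) := by
    have : Real.exp (-(4*a+t)/8) ≤ 1 := by
      apply Real.exp_le_one_iff.mpr
      linarith
    linarith
  have hgoal2 : hker N x y t ≥ β * (1 - Real.exp (-(4*a+t)/8)) * gauss (N+1) v (t/2) := by
    rw [hkerEq, hsplitInt]
    have hX : 0 ≤ β * ((1 - Real.exp (-(4*a+t)/8)) * gauss (N+1) v (t/2)) :=
      mul_nonneg hβ0 (mul_nonneg hone hΓ)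
    nlinarith [hmono, htail]
  rw [show (-(4 * (x (Fin.last N) + y (Fin.last N)) + t) / 8) = (-(4*a+t)/8) by rw [ha]]
  exact hgoal2
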